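/- Let H be a graph with χ(H) > 2 and 𝓗 the family of graphs obtained from H by deleting a color class. Let G be a graph whose vertex set is M ∪ {u, v} with |M| = l, such that G[M] is 𝓗-free and G is H-free. Let 𝓗' be the family of graphs obtained from H by deleting two adjacent vertices, and suppose every extremal 𝓗-free graph on l vertices contains a member of 𝓗'. Then e(G) ≤ ex(l, 𝓗) + 2l. -/

import Mathlib

open SimpleGraph

/-- `H` has a copy in `G`, i.e. `G` contains `H` as a (not necessarily induced) subgraph. -/
def CopyIn {α β : Type*} (H : SimpleGraph α) (G : SimpleGraph β) : Prop :=
  ∃ f : α ↪ β, ∀ a b, H.Adj a b → G.Adj (f a) (f b)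

/-- The join `G ∨ H` of two graphs: disjoint union plus all edges in between. -/
def graphJoin {α β : Type*} (G : SimpleGraph α) (H : SimpleGraph β) : SimpleGraph (α ⊕ β) where
  Adj x y := (∃ a b, x = Sum.inl a ∧ y = Sum.inl b ∧ G.Adj a b) ∨
    (∃ a b, x = Sum.inr a ∧ y = Sum.inr b ∧ H.Adj a b) ∨
    (x.isLeft ∧ y.isRight) ∨ (x.isRight ∧ y.isLeft)
  symm := by
    refine ⟨?_⟩
    rintro x y (⟨a, b, rfl, rfl, h⟩ | ⟨a, b, rfl, rfl, h⟩ | ⟨h1, h2⟩ | ⟨h1, h2⟩)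
    · exact Or.inl ⟨b, a, rfl, rfl, h.symm⟩
    · exact Or.inr (Or.inl ⟨b, a, rfl, rfl, h.symm⟩)
    · exact Or.inr (Or.inr (Or.inr ⟨h2, h1⟩))
    · exact Or.inr (Or.inr (Or.inl ⟨h2, h1⟩))
  loopless := by
    refine ⟨?_⟩
    rintro x (⟨a, b, rfl, heq, h⟩ | ⟨a, b, rfl, heq, h⟩ | ⟨h1, h2⟩ | ⟨h1, h2⟩)
    · cases heq; exact h.ne rfl
    · cases heq; exact h.ne rfl
    · cases x <;> simp_all
    · cases x <;> simp_all

/-- A matching with `t` edges. -/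
def matchingGraph (t : ℕ) : SimpleGraph (Fin t × Fin 2) :=
  SimpleGraph.fromRel (fun p q => p.1 = q.1)

/-- The star with `t` edges. -/
def starGraph (t : ℕ) : SimpleGraph (Fin 1 ⊕ Fin t) := completeBipartiteGraph (Fin 1) (Fin t)

/-- Turán number of a single forbidden graph. -/
noncomputable def exNum1 {α : Type*} (n : ℕ) (A : SimpleGraph α) : ℕ :=
  sSup {e | ∃ G : SimpleGraph (Fin n), ¬ CopyIn A G ∧ e = G.edgeSet.ncard}

/-- Turán number of two forbidden graphs. -/
noncomputable def exNum2 {α β : Type*} (n : ℕ) (A : SimpleGraph α) (B : SimpleGraph β) : ℕ :=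
  sSup {e | ∃ G : SimpleGraph (Fin n),
    ¬ CopyIn A G ∧ ¬ CopyIn B G ∧ e = G.edgeSet.ncard}

/-- Connected Turán number of two forbidden graphs. -/
noncomputable def exConn2 {α β : Type*} (n : ℕ) (A : SimpleGraph α) (B : SimpleGraph β) : ℕ :=
  sSup {e | ∃ G : SimpleGraph (Fin n),
    G.Connected ∧ ¬ CopyIn A G ∧ ¬ CopyIn B G ∧ e = G.edgeSet.ncard}

/-- Turán number of a family of forbidden graphs. -/
noncomputable def exNumFam (n : ℕ) (F : Set (Σ V : Type, SimpleGraph V)) : ℕ :=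
  sSup {e | ∃ G : SimpleGraph (Fin n),
    (∀ M ∈ F, ¬ CopyIn M.2 G) ∧ e = G.edgeSet.ncard}

/-- The family of graphs obtained from `H` by deleting one color class of a proper coloring
of `H` with `χ(H)` colors. -/
def delClassFam {W : Type} (H : SimpleGraph W) : Set (Σ V : Type, SimpleGraph V) :=
  {M | ∃ (m : ℕ) (C : H.Coloring (Fin m)) (c : Fin m),
    H.chromaticNumber = (m : ℕ∞) ∧
    M = ⟨{v : W | C v ≠ c}, H.induce {v : W | C v ≠ c}⟩}

/-- The family of graphs obtained from `H` by deleting two adjacent vertices. -/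
def delPairFam {W : Type} (H : SimpleGraph W) : Set (Σ V : Type, SimpleGraph V) :=
  {M | ∃ u v : W, H.Adj u v ∧
    M = ⟨{x : W | x ≠ u ∧ x ≠ v}, H.induce {x : W | x ≠ u ∧ x ≠ v}⟩}

/-! Every edge of `G` lies in `G[M]` or meets `u` or `v`, so
`e(G) ≤ e(G[M]) + d(u) + d(v) - [uv ∈ E(G)]`, where `e(G[M]) ≤ ex(l, 𝓗)` and
`d(u), d(v) ≤ l + 1` with equality only for a vertex adjacent to all others.
The bound can therefore fail only if `u` and `v` are both universal and `G[M]` is extremal;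
but then `G[M]` contains `H` minus two adjacent vertices `x, y`, and sending `x ↦ u`, `y ↦ v`
completes it to a copy of `H` in `G`. -/

section

variable {α β V W : Type*}

lemma CopyIn.map_iso {A : SimpleGraph α} {G : SimpleGraph β} {G' : SimpleGraph V}
    (h : CopyIn A G) (φ : G ≃g G') : CopyIn A G' := by
  obtain ⟨f, hf⟩ := h
  exact ⟨f.trans φ.toEmbedding.toEmbedding, fun a b hab => φ.map_rel_iff.mpr (hf a b hab)⟩

lemma ncard_edgeSet_le_exNumFam {n : ℕ} {𝓕 : Set (Σ V : Type, SimpleGraph V)}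
    {T : SimpleGraph (Fin n)} (hT : ∀ F ∈ 𝓕, ¬ CopyIn F.2 T) :
    T.edgeSet.ncard ≤ exNumFam n 𝓕 := by
  refine le_csSup ⟨(Set.univ : Set (Sym2 (Fin n))).ncard, ?_⟩ ⟨T, hT, rfl⟩
  rintro _ ⟨G, -, rfl⟩
  exact Set.ncard_le_ncard (Set.subset_univ _)

namespace SimpleGraph

lemma Iso.ncard_edgeSet_eq {G : SimpleGraph α} {G' : SimpleGraph β} (φ : G ≃g G') :
    G.edgeSet.ncard = G'.edgeSet.ncard := by
  rw [← Nat.card_coe_set_eq, ← Nat.card_coe_set_eq]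
  exact Nat.card_congr φ.mapEdgeSet

lemma exists_iso_fin_of_natCard_eq [Finite β] (G : SimpleGraph β) {n : ℕ}
    (h : Nat.card β = n) :
    ∃ T : SimpleGraph (Fin n), Nonempty (T ≃g G) :=
  ⟨_, ⟨Iso.comap ((Finite.equivFin β).trans (finCongr h)).symm G⟩⟩

lemma ncard_incidenceSet [Fintype V] (G : SimpleGraph V) [DecidableRel G.Adj] (v : V) :
    (G.incidenceSet v).ncard = G.degree v := by
  classical
  rw [← Nat.card_coe_set_eq, Nat.card_eq_fintype_card, card_incidenceSet_eq_degree]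

lemma ncard_edgeSet_add_ncard_incidenceSet_inter_le [Fintype V] {G : SimpleGraph V}
    [DecidableRel G.Adj] {M : Set V} {u v : V} (hV : (Set.univ : Set V) = M ∪ {u, v}) :
    G.edgeSet.ncard + (G.incidenceSet u ∩ G.incidenceSet v).ncard ≤
      (G.induce M).edgeSet.ncard + G.degree u + G.degree v := by
  have hcover : G.edgeSet ⊆
      Sym2.map Subtype.val '' (G.induce M).edgeSet ∪ (G.incidenceSet u ∪ G.incidenceSet v) := by
    have hmem : ∀ x, x = u ∨ x = v ∨ x ∈ M := fun x => by
      simpa using (hV ▸ Set.mem_univ x : x ∈ M ∪ {u, v})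
    intro e he
    induction e with | _ a b =>
    simp only [Set.mem_union, Set.mem_image]
    rcases hmem a with rfl | rfl | ha
    · exact Or.inr (Or.inl ⟨he, Sym2.mem_mk_left a b⟩)
    · exact Or.inr (Or.inr ⟨he, Sym2.mem_mk_left a b⟩)
    rcases hmem b with rfl | rfl | hb
    · exact Or.inr (Or.inl ⟨he, Sym2.mem_mk_right a b⟩)
    · exact Or.inr (Or.inr ⟨he, Sym2.mem_mk_right a b⟩)
    · exact Or.inl ⟨s(⟨a, ha⟩, ⟨b, hb⟩), he, rfl⟩
  calc G.edgeSet.ncard + (G.incidenceSet u ∩ G.incidenceSet v).ncard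
      ≤ (Sym2.map Subtype.val '' (G.induce M).edgeSet).ncard
          + (G.incidenceSet u ∪ G.incidenceSet v).ncard
          + (G.incidenceSet u ∩ G.incidenceSet v).ncard := by
        gcongr
        exact (Set.ncard_le_ncard hcover).trans (Set.ncard_union_le _ _)
    _ = (G.induce M).edgeSet.ncard + G.degree u + G.degree v := by
        rw [add_assoc, Set.ncard_union_add_ncard_inter, ncard_incidenceSet, ncard_incidenceSet,
          Set.ncard_image_of_injective _ (Sym2.map.injective Subtype.val_injective), add_assoc]

lemma ncard_edgeSet_le_induce_add_two_mul [Fintype V] {G : SimpleGraph V} {M : Set V} {u v : V}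
    {l : ℕ} (hM : M.ncard = l) (hu : u ∉ M) (hv : v ∉ M) (huv : u ≠ v)
    (hV : (Set.univ : Set V) = M ∪ {u, v}) :
    G.edgeSet.ncard ≤ (G.induce M).edgeSet.ncard + 2 * l + 1 ∧
      (¬ (G.IsUniversal u ∧ G.IsUniversal v) →
        G.edgeSet.ncard ≤ (G.induce M).edgeSet.ncard + 2 * l) := by
  classical
  have hcard : Fintype.card V = l + 2 := by
    rw [← Nat.card_eq_fintype_card, ← Set.ncard_univ, hV,
      Set.ncard_union_eq (by simp [hu, hv]), hM, Set.ncard_pair huv]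
  have hdeg_le (w : V) : G.degree w ≤ l + 1 := by
    have := G.degree_lt_card_verts w
    omega
  have hdeg_le_of_not (w : V) (hw : ¬ G.IsUniversal w) : G.degree w ≤ l := by
    have := (G.degree_lt_card_sub_one w).2 hw
    omega
  have hE := ncard_edgeSet_add_ncard_incidenceSet_inter_le (G := G) hV
  have := hdeg_le u
  have := hdeg_le v
  by_cases hadj : G.Adj u v
  · rw [G.incidenceSet_inter_incidenceSet_of_adj hadj, Set.ncard_singleton] at hE
    refine ⟨by omega, fun huniv => ?_⟩
    rcases not_and_or.1 huniv with hnu | hnv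
    · have := hdeg_le_of_not u hnu
      omega
    · have := hdeg_le_of_not v hnv
      omega
  · have := hdeg_le_of_not u fun h => hadj (h huv)
    have := hdeg_le_of_not v fun h => hadj (h huv.symm).symm
    constructor <;> omega

lemma copyIn_of_isUniversal {H : SimpleGraph W} {G : SimpleGraph V} {M : Set V} {x y : W} {u v : V}
    (hu : u ∉ M) (hv : v ∉ M) (huv : u ≠ v) (hGu : G.IsUniversal u) (hGv : G.IsUniversal v)
    (h : CopyIn (H.induce {w | w ≠ x ∧ w ≠ y}) (G.induce M)) : CopyIn H G := by
  classical
  obtain ⟨f, hf⟩ := h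
  let g : W → V := fun w => if hx : w = x then u else if hy : w = y then v else f ⟨w, hx, hy⟩
  have hfM : ∀ w hx hy, (f ⟨w, hx, hy⟩ : V) ≠ u ∧ (f ⟨w, hx, hy⟩ : V) ≠ v :=
    fun w hx hy => ⟨fun h => hu (h ▸ (f _).2), fun h => hv (h ▸ (f _).2)⟩
  have hfinj : ∀ a b ha hb, (f ⟨a, ha⟩ : V) = f ⟨b, hb⟩ → a = b := fun a b ha hb h =>
    congrArg Subtype.val (f.injective (Subtype.val_injective h))
  refine ⟨⟨g, fun a b hab => ?_⟩, fun a b hab => ?_⟩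
  · simp only [g] at hab
    split_ifs at hab <;> grind
  · show G.Adj (g a) (g b)
    simp only [g]
    split_ifs
    all_goals first
      | exact hf _ _ hab
      | grind [IsUniversal, Adj.symm, SimpleGraph.irrefl]

end SimpleGraph

end

theorem lemma_two_extra_vertices_general {W : Type} (H : SimpleGraph W)
    {V : Type*} [Fintype V] (G : SimpleGraph V) (M : Set V) (u v : V) (l : ℕ)
    (hMl : M.ncard = l) (hu : u ∉ M) (hv : v ∉ M) (huv : u ≠ v)
    (hV : (Set.univ : Set V) = M ∪ {u, v})
    (hGM : ∀ F ∈ delClassFam H, ¬ CopyIn F.2 (G.induce M))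
    (hGH : ¬ CopyIn H G)
    (hext : ∀ T : SimpleGraph (Fin l),
      (∀ F ∈ delClassFam H, ¬ CopyIn F.2 T) →
      T.edgeSet.ncard = exNumFam l (delClassFam H) →
      ∃ F ∈ delPairFam H, CopyIn F.2 T) :
    G.edgeSet.ncard ≤ exNumFam l (delClassFam H) + 2 * l := by
  obtain ⟨T, ⟨φ⟩⟩ :=
    exists_iso_fin_of_natCard_eq (G.induce M) (by rw [Nat.card_coe_set_eq, hMl])
  have hT : ∀ F ∈ delClassFam H, ¬ CopyIn F.2 T := fun F hF h => hGM F hF (h.map_iso φ)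
  have hM_le := φ.ncard_edgeSet_eq ▸ ncard_edgeSet_le_exNumFam hT
  obtain ⟨hG_le, hG_le_of_not⟩ := ncard_edgeSet_le_induce_add_two_mul (G := G) hMl hu hv huv hV
  by_cases huniv : G.IsUniversal u ∧ G.IsUniversal v
  · have hM_lt : (G.induce M).edgeSet.ncard < exNumFam l (delClassFam H) := by
      refine hM_le.lt_of_ne fun heq => hGH ?_
      obtain ⟨F, ⟨x, y, -, rfl⟩, hF⟩ := hext T hT (by rw [φ.ncard_edgeSet_eq, heq])
      exact copyIn_of_isUniversal hu hv huv huniv.1 huniv.2 (hF.map_iso φ)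
    omega
  · have := hG_le_of_not huniv
    omega

theorem lemma_two_extra_vertices {W : Type} [Fintype W] (H : SimpleGraph W)
    (hχ : 2 < H.chromaticNumber)
    {V : Type*} [Fintype V] (G : SimpleGraph V) (M : Set V) (u v : V) (l : ℕ)
    (hMl : M.ncard = l) (hu : u ∉ M) (hv : v ∉ M) (huv : u ≠ v)
    (hV : (Set.univ : Set V) = M ∪ {u, v})
    (hGM : ∀ F ∈ delClassFam H, ¬ CopyIn F.2 (G.induce M))
    (hGH : ¬ CopyIn H G)
    (hext : ∀ T : SimpleGraph (Fin l),
      (∀ F ∈ delClassFam H, ¬ CopyIn F.2 T) →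
      T.edgeSet.ncard = exNumFam l (delClassFam H) →
      ∃ F ∈ delPairFam H, CopyIn F.2 T) :
    G.edgeSet.ncard ≤ exNumFam l (delClassFam H) + 2 * l :=
  lemma_two_extra_vertices_general H G M u v l hMl hu hv huv hV hGM hGH hext
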